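/- In the root system of type B_n realized in ℝ^n, the Kostant cascade consists of the roots β_i = ε_{2i-1} + ε_{2i} for 1 ≤ i ≤ ⌊n/2⌋ together with the simple roots α_{2i-1} = ε_{2i-1} − ε_{2i} for 1 ≤ i ≤ ⌊(n+1)/2⌋. -/
import Mathlib


/- Kostant cascade machinery for a root system in a real inner product space. -/

open scoped RealInnerProductSpace

variable {V : Type*} [NormedAddCommGroup V] [InnerProductSpace ℝ V]

/-- Two roots of `Rs` are linked if they are not orthogonal. -/
def Linked (Rs : Set V) (a b : V) : Prop := a ∈ Rs ∧ b ∈ Rs ∧ ⟪a, b⟫ ≠ 0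

/-- `C` is an irreducible component of the root subsystem `Rs` :
it is a connectedness class of the non-orthogonality relation. -/
def IsComponent (Rs : Set V) (C : Set V) : Prop :=
  ∃ a ∈ Rs, C = {b | Relation.ReflTransGen (Linked Rs) a b}

/-- `β` is the highest root of the (irreducible) subsystem `C` of `Rs`
with respect to the positive system `pos`. -/
def IsHighestRoot (Rs pos C : Set V) (β : V) : Prop :=
  β ∈ C ∧ β ∈ pos ∧ ∀ α ∈ C, α ∈ pos → β + α ∉ Rs

/-- The subsystems occurring in the recursive construction of the Kostant cascade:
irreducible components of `Rs`, and recursively irreducible components of the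
orthogonal complement of the highest root of a cascade subsystem. -/
inductive CascadeSub (Rs pos : Set V) : Set V → Prop
  | base (C : Set V) : IsComponent Rs C → CascadeSub Rs pos C
  | step (K C : Set V) (β : V) : CascadeSub Rs pos K → IsHighestRoot Rs pos K β →
      IsComponent {α ∈ K | ⟪α, β⟫ = 0} C → CascadeSub Rs pos C

/-- The Kostant cascade `β_π` : the highest roots of the cascade subsystems. -/
def cascadeSet (Rs pos : Set V) : Set V :=
  {β | ∃ K, CascadeSub Rs pos K ∧ IsHighestRoot Rs pos K β}

/-- `H_β = {α ∈ Δ_K : (α, β) > 0}` where `Δ_K` is the cascade subsystem with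
highest root `β`. -/
def cascadeH (Rs pos : Set V) (β : V) : Set V :=
  {α | ∃ K, CascadeSub Rs pos K ∧ IsHighestRoot Rs pos K β ∧ α ∈ K ∧ 0 < ⟪α, β⟫}

/-- 1-based orthonormal basis vectors `ε_k` of `ℝ^n` (zero out of range). -/
noncomputable def eps (n k : ℕ) : EuclideanSpace ℝ (Fin n) :=
  if h : 1 ≤ k ∧ k ≤ n then EuclideanSpace.single ⟨k - 1, by omega⟩ (1 : ℝ) else 0

/-- Positive roots of the type `B_n` root system in `ℝ^n`. -/
noncomputable def posB (n : ℕ) : Set (EuclideanSpace ℝ (Fin n)) :=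
  {v | ∃ i j, 1 ≤ i ∧ i < j ∧ j ≤ n ∧ (v = eps n i - eps n j ∨ v = eps n i + eps n j)}
  ∪ {v | ∃ i, 1 ≤ i ∧ i ≤ n ∧ v = eps n i}

/-- The type `B_n` root system in `ℝ^n` : `{±ε_i ± ε_j (i<j), ±ε_i}`. -/
noncomputable def rootsB (n : ℕ) : Set (EuclideanSpace ℝ (Fin n)) :=
  posB n ∪ {v | -v ∈ posB n}

/-- The Kostant cascade of `B_n` consists of the roots
`β_i = ε_{2i-1} + ε_{2i}` for `1 ≤ i ≤ ⌊n/2⌋` together with the simple roots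
`α_{2i-1} = ε_{2i-1} - ε_{2i}` for `1 ≤ i ≤ ⌊(n+1)/2⌋` (for `n` odd and
`i = (n+1)/2` this is `α_n = ε_n`, as `ε_{n+1} = 0`). -/
lemma eps_out {n k : ℕ} (h : ¬(1 ≤ k ∧ k ≤ n)) : eps n k = 0 := by
  simp [eps, h]

lemma inner_eps_eps (n i j : ℕ) :
    ⟪eps n i, eps n j⟫ = if i = j ∧ 1 ≤ i ∧ i ≤ n then 1 else 0 := by
  by_cases hi : 1 ≤ i ∧ i ≤ n
  · by_cases hj : 1 ≤ j ∧ j ≤ n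
    · rw [eps, dif_pos hi, eps, dif_pos hj, EuclideanSpace.inner_single_left,
        EuclideanSpace.single_apply]
      have h2 : ((⟨i-1, by omega⟩ : Fin n) = ⟨j-1, by omega⟩) ↔ i = j := by
        rw [Fin.ext_iff]; simp; omega
      split
      · rename_i h
        rw [if_pos (⟨(h2.mp h), hi⟩)]; simp
      · rename_i h
        rw [if_neg]; · simp
        rintro ⟨rfl, -⟩; exact h (h2.mpr rfl)
    · rw [eps_out hj, if_neg (by rintro ⟨rfl, h⟩; exact hj h)]
      simp
  · rw [eps_out hi, if_neg (by rintro ⟨rfl, h⟩; exact hi h)]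
    simp

noncomputable def del (n a b : ℕ) : ℝ := if a = b ∧ 1 ≤ a ∧ a ≤ n then 1 else 0

lemma del_self {n a : ℕ} (h1 : 1 ≤ a) (h2 : a ≤ n) : del n a a = 1 := by
  simp [del, h1, h2]

lemma del_ne {n a b : ℕ} (h : a ≠ b) : del n a b = 0 := by simp [del, h]

lemma del_out {n a b : ℕ} (h : n < a) : del n a b = 0 := by
  unfold del; rw [if_neg]; rintro ⟨rfl, h1, h2⟩; omega

lemma inner_pair_pair (n i j i' j' : ℕ) (c d c' d' : ℝ) :
    ⟪c • eps n i + d • eps n j, c' • eps n i' + d' • eps n j'⟫ =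
      c*c'*(del n i i') + c*d'*(del n i j') + d*c'*(del n j i') + d*d'*(del n j j') := by
  have e1 : ∀ a b : ℕ, ⟪eps n a, eps n b⟫ = del n a b := fun a b => inner_eps_eps n a b
  simp only [inner_add_left, inner_add_right, real_inner_smul_left, real_inner_smul_right,
    RCLike.conj_to_real, e1]
  ring

lemma mem_posB_iff {n : ℕ} {v : EuclideanSpace ℝ (Fin n)} :
    v ∈ posB n ↔ ∃ i j, ∃ d : ℝ, 1 ≤ i ∧ i < j ∧ j ≤ n+1 ∧ (d = 1 ∨ d = -1) ∧
      v = eps n i + d • eps n j := by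
  constructor
  · rintro (⟨i, j, h1, h2, h3, (rfl | rfl)⟩ | ⟨i, h1, h2, rfl⟩)
    · exact ⟨i, j, -1, h1, h2, by omega, Or.inr rfl, by module⟩
    · exact ⟨i, j, 1, h1, h2, by omega, Or.inl rfl, by module⟩
    · refine ⟨i, n+1, 1, h1, by omega, le_refl _, Or.inl rfl, ?_⟩
      rw [eps_out (k := n+1) (by omega)]; module
  · rintro ⟨i, j, d, h1, h2, h3, hd, rfl⟩
    by_cases hj : j ≤ n
    · rcases hd with rfl | rfl
      · exact Or.inl ⟨i, j, h1, h2, hj, Or.inr (by module)⟩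
      · exact Or.inl ⟨i, j, h1, h2, hj, Or.inl (by module)⟩
    · have hj' : ¬ (1 ≤ j ∧ j ≤ n) := by omega
      exact Or.inr ⟨i, h1, by omega, by rw [eps_out hj']; module⟩

lemma mem_rootsB_iff {n : ℕ} {v : EuclideanSpace ℝ (Fin n)} :
    v ∈ rootsB n ↔ ∃ i j, ∃ c d : ℝ, 1 ≤ i ∧ i < j ∧ j ≤ n+1 ∧ (c = 1 ∨ c = -1) ∧
      (d = 1 ∨ d = -1) ∧ v = c • eps n i + d • eps n j := by
  constructor
  · rintro (h | h)
    · obtain ⟨i, j, d, h1, h2, h3, hd, rfl⟩ := mem_posB_iff.mp h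
      exact ⟨i, j, 1, d, h1, h2, h3, Or.inl rfl, hd, by module⟩
    · obtain ⟨i, j, d, h1, h2, h3, hd, hv⟩ := mem_posB_iff.mp h
      refine ⟨i, j, -1, -d, h1, h2, h3, Or.inr rfl, by rcases hd with rfl | rfl <;> norm_num, ?_⟩
      have : v = -(eps n i + d • eps n j) := by rw [← hv]; module
      rw [this]; module
  · rintro ⟨i, j, c, d, h1, h2, h3, hc, hd, rfl⟩
    rcases hc with rfl | rfl
    · exact Or.inl (mem_posB_iff.mpr ⟨i, j, d, h1, h2, h3, hd, by module⟩)
    · refine Or.inr (mem_posB_iff.mpr ⟨i, j, -d, h1, h2, h3, ?_, by module⟩)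
      rcases hd with rfl | rfl <;> norm_num

noncomputable def hrB (n m : ℕ) : EuclideanSpace ℝ (Fin n) := eps n (2*m+1) + eps n (2*m+2)

noncomputable def gamB (n i : ℕ) : EuclideanSpace ℝ (Fin n) := eps n (2*i-1) - eps n (2*i)

def BsetD (n m : ℕ) : Set (EuclideanSpace ℝ (Fin n)) :=
  {v | v ∈ rootsB n ∧ ∀ k, 1 ≤ k → k ≤ 2*m → ⟪eps n k, v⟫ = 0}

def AsetD (n i : ℕ) : Set (EuclideanSpace ℝ (Fin n)) := {v | v = gamB n i ∨ v = -gamB n i}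

lemma inner_eps_pair (n k i j : ℕ) (c d : ℝ) :
    ⟪eps n k, c • eps n i + d • eps n j⟫ = c * del n k i + d * del n k j := by
  have h : eps n k = (1:ℝ) • eps n k + (0:ℝ) • eps n k := by module
  nth_rewrite 1 [h]
  rw [inner_pair_pair]; ring

lemma inner_pair_eps (n k i j : ℕ) (c d : ℝ) :
    ⟪c • eps n i + d • eps n j, eps n k⟫ = c * del n k i + d * del n k j := by
  rw [real_inner_comm, inner_eps_pair]

lemma pair_mem_rootsB {n i j : ℕ} {c d : ℝ} (h1 : 1 ≤ i) (h2 : i < j) (h3 : j ≤ n+1)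
    (hc : c = 1 ∨ c = -1) (hd : d = 1 ∨ d = -1) :
    c • eps n i + d • eps n j ∈ rootsB n :=
  mem_rootsB_iff.mpr ⟨i, j, c, d, h1, h2, h3, hc, hd, rfl⟩

lemma pair_mem_BsetD {n m i j : ℕ} {c d : ℝ} (h1 : 1 ≤ i) (h2 : i < j) (h3 : j ≤ n+1)
    (hc : c = 1 ∨ c = -1) (hd : d = 1 ∨ d = -1) :
    c • eps n i + d • eps n j ∈ BsetD n m ↔ 2*m < i := by
  constructor
  · rintro ⟨-, hall⟩
    by_contra hle
    have hi := hall i h1 (by omega)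
    rw [inner_eps_pair, del_self h1 (by omega), del_ne (by omega)] at hi
    rcases hc with rfl | rfl <;> norm_num at hi
  · intro him
    refine ⟨pair_mem_rootsB h1 h2 h3 hc hd, fun k hk1 hk2 => ?_⟩
    rw [inner_eps_pair, del_ne (by omega), del_ne (by omega)]
    ring

lemma del_cases (n a b : ℕ) : del n a b = 0 ∨ del n a b = 1 := by
  unfold del; split <;> simp

lemma del_nonneg (n a b : ℕ) : 0 ≤ del n a b := by
  rcases del_cases n a b with h | h <;> rw [h] <;> norm_num

lemma del_le_one (n a b : ℕ) : del n a b ≤ 1 := by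
  rcases del_cases n a b with h | h <;> rw [h] <;> norm_num

lemma root_inner_self_le {n : ℕ} {v : EuclideanSpace ℝ (Fin n)} (h : v ∈ rootsB n) :
    ⟪v, v⟫ ≤ 2 := by
  obtain ⟨i, j, c, d, h1, h2, h3, hc, hd, rfl⟩ := mem_rootsB_iff.mp h
  rw [inner_pair_pair, del_ne (show i ≠ j by omega), del_ne (show j ≠ i by omega),
    del_self h1 (show i ≤ n by omega)]
  have g2 := del_le_one n j j
  rcases hc with rfl | rfl <;> rcases hd with rfl | rfl <;> nlinarith

lemma hrB_rep (n m : ℕ) : hrB n m = (1:ℝ) • eps n (2*m+1) + (1:ℝ) • eps n (2*m+2) := by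
  rw [hrB]; module

lemma gamB_rep (n i : ℕ) : gamB n i = (1:ℝ) • eps n (2*i-1) + (-1:ℝ) • eps n (2*i) := by
  rw [gamB]; module

lemma hrB_mem_posB {n m : ℕ} (h : 2*m+1 ≤ n) : hrB n m ∈ posB n :=
  mem_posB_iff.mpr ⟨2*m+1, 2*m+2, 1, by omega, by omega, by omega, Or.inl rfl, by
    rw [hrB]; module⟩

lemma hrB_mem_BsetD {n m : ℕ} (h : 2*m+1 ≤ n) : hrB n m ∈ BsetD n m := by
  rw [hrB_rep]
  exact (pair_mem_BsetD (by omega) (by omega) (by omega) (Or.inl rfl) (Or.inl rfl)).mpr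
    (by omega)

lemma gamB_mem_posB {n i : ℕ} (h1 : 1 ≤ i) (h2 : 2*i ≤ n) : gamB n i ∈ posB n :=
  mem_posB_iff.mpr ⟨2*i-1, 2*i, -1, by omega, by omega, by omega, Or.inr rfl, by
    rw [gamB]; module⟩

lemma neg_gamB_not_posB {n i : ℕ} (h1 : 1 ≤ i) (h2 : 2*i ≤ n) : -gamB n i ∉ posB n := by
  intro h
  obtain ⟨i', j', d, g1, g2, g3, hd, heq⟩ := mem_posB_iff.mp h
  have hg : -gamB n i = (-1:ℝ) • eps n (2*i-1) + (1:ℝ) • eps n (2*i) := by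
    rw [gamB]; module
  have heq' : (-1:ℝ) • eps n (2*i-1) + (1:ℝ) • eps n (2*i)
      = (1:ℝ) • eps n i' + d • eps n j' :=
    (hg.symm.trans heq).trans (by module)
  have key : ∀ k, ⟪eps n k, (-1:ℝ) • eps n (2*i-1) + (1:ℝ) • eps n (2*i)⟫
      = ⟪eps n k, (1:ℝ) • eps n i' + d • eps n j'⟫ := fun k => by rw [heq']
  have h5 := key i'
  rw [inner_eps_pair, inner_eps_pair, del_self g1 (show i' ≤ n by omega),
    del_ne (show i' ≠ j' by omega)] at h5
  have hi2 : i' = 2*i := by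
    by_contra hne
    rw [del_ne hne] at h5
    rcases del_cases n i' (2*i-1) with h0 | h0 <;> rw [h0] at h5 <;> norm_num at h5
  subst hi2
  have h6 := key (2*i-1)
  rw [inner_eps_pair, inner_eps_pair, del_self (show 1 ≤ 2*i-1 by omega) (show 2*i-1 ≤ n by omega),
    del_ne (show 2*i-1 ≠ 2*i by omega), del_ne (show 2*i-1 ≠ j' by omega)] at h6
  norm_num at h6

lemma sum_not_root_BsetD {n m : ℕ} (h : 2*m+1 ≤ n) {α : EuclideanSpace ℝ (Fin n)}
    (hα : α ∈ BsetD n m) (hαp : α ∈ posB n) : hrB n m + α ∉ rootsB n := by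
  intro hmem
  have hle := root_inner_self_le hmem
  obtain ⟨i, j, d, g1, g2, g3, hd, heq⟩ := mem_posB_iff.mp hαp
  have heq1 : α = (1:ℝ) • eps n i + d • eps n j := heq.trans (by module)
  rw [heq1] at hα
  have hi : 2*m < i := (pair_mem_BsetD g1 g2 g3 (Or.inl rfl) hd).mp hα
  rw [heq1, real_inner_add_add_self, hrB_rep, inner_pair_pair, inner_pair_pair,
    inner_pair_pair, del_self (show 1 ≤ 2*m+1 by omega) h,
    del_ne (show 2*m+1 ≠ 2*m+2 by omega), del_ne (show 2*m+2 ≠ 2*m+1 by omega),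
    del_ne (show 2*m+1 ≠ j by omega), del_self g1 (show i ≤ n by omega),
    del_ne (show i ≠ j by omega), del_ne (show j ≠ i by omega)] at hle
  simp only [del, eq_self_iff_true, true_and] at hle
  rcases hd with rfl | rfl <;>
    · split_ifs at hle <;> first | omega | norm_num at hle

lemma isHighestRoot_BsetD {n m : ℕ} (h : 2*m+1 ≤ n) (β : EuclideanSpace ℝ (Fin n)) :
    IsHighestRoot (rootsB n) (posB n) (BsetD n m) β ↔ β = hrB n m := by
  constructor
  · rintro ⟨hC, hp, hmax⟩
    obtain ⟨i, j, d, g1, g2, g3, hd, heq⟩ := mem_posB_iff.mp hp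
    have heq1 : β = (1:ℝ) • eps n i + d • eps n j := heq.trans (by module)
    rw [heq1] at hC
    have hi : 2*m < i := (pair_mem_BsetD g1 g2 g3 (Or.inl rfl) hd).mp hC
    by_cases hj : j ≤ n
    · rcases hd with rfl | rfl
      · by_cases hij : i = 2*m+1 ∧ j = 2*m+2
        · rw [heq1, hij.1, hij.2, hrB_rep]
        · exfalso
          by_cases hi2 : i = 2*m+1
          · have hj2 : 2*m+2 < j := by omega
            refine hmax ((1:ℝ) • eps n (2*m+2) + (-1:ℝ) • eps n j)
              ((pair_mem_BsetD (by omega) hj2 (by omega) (Or.inl rfl) (Or.inr rfl)).mpr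
                (by omega))
              (mem_posB_iff.mpr ⟨2*m+2, j, -1, by omega, hj2, by omega, Or.inr rfl, by module⟩) ?_
            have hs : β + ((1:ℝ) • eps n (2*m+2) + (-1:ℝ) • eps n j)
                = (1:ℝ) • eps n (2*m+1) + (1:ℝ) • eps n (2*m+2) := by
              rw [heq1, hi2]; module
            rw [hs]
            exact pair_mem_rootsB (by omega) (by omega) (by omega) (Or.inl rfl) (Or.inl rfl)
          · have hi3 : 2*m+1 < i := by omega
            refine hmax ((1:ℝ) • eps n (2*m+1) + (-1:ℝ) • eps n i)
              ((pair_mem_BsetD (by omega) hi3 (by omega) (Or.inl rfl) (Or.inr rfl)).mpr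
                (by omega))
              (mem_posB_iff.mpr ⟨2*m+1, i, -1, by omega, hi3, by omega, Or.inr rfl, by module⟩) ?_
            have hs : β + ((1:ℝ) • eps n (2*m+1) + (-1:ℝ) • eps n i)
                = (1:ℝ) • eps n (2*m+1) + (1:ℝ) • eps n j := by
              rw [heq1]; module
            rw [hs]
            exact pair_mem_rootsB (by omega) (by omega) (by omega) (Or.inl rfl) (Or.inl rfl)
      · exfalso
        refine hmax ((1:ℝ) • eps n j + (1:ℝ) • eps n (n+1))
          ((pair_mem_BsetD (by omega) (by omega) (by omega) (Or.inl rfl) (Or.inl rfl)).mpr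
            (by omega))
          (mem_posB_iff.mpr ⟨j, n+1, 1, by omega, by omega, by omega, Or.inl rfl, by module⟩) ?_
        have hs : β + ((1:ℝ) • eps n j + (1:ℝ) • eps n (n+1))
            = (1:ℝ) • eps n i + (1:ℝ) • eps n (n+1) := by
          rw [heq1]; module
        rw [hs]
        exact pair_mem_rootsB g1 (by omega) (by omega) (Or.inl rfl) (Or.inl rfl)
    · have hz : eps n (n+1) = 0 := eps_out (k := n+1) (by omega)
      have hjn : j = n+1 := by omega
      have hβ' : β = (1:ℝ) • eps n i + (1:ℝ) • eps n (n+1) := by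
        rw [heq1, hjn, hz]; module
      by_cases hi2 : i = 2*m+1
      · by_cases hb : 2*m+2 ≤ n
        · exfalso
          refine hmax ((1:ℝ) • eps n (2*m+2) + (1:ℝ) • eps n (n+1))
            ((pair_mem_BsetD (by omega) (by omega) (by omega) (Or.inl rfl) (Or.inl rfl)).mpr
              (by omega))
            (mem_posB_iff.mpr ⟨2*m+2, n+1, 1, by omega, by omega, by omega, Or.inl rfl,
              by module⟩) ?_
          have hs : β + ((1:ℝ) • eps n (2*m+2) + (1:ℝ) • eps n (n+1))
              = (1:ℝ) • eps n (2*m+1) + (1:ℝ) • eps n (2*m+2) := by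
            rw [hβ', hi2, hz]; module
          rw [hs]
          exact pair_mem_rootsB (by omega) (by omega) (by omega) (Or.inl rfl) (Or.inl rfl)
        · have hrB_eq : hrB n m = (1:ℝ) • eps n i + (1:ℝ) • eps n (n+1) := by
            rw [hrB_rep, show 2*m+1 = i by omega, show 2*m+2 = n+1 by omega]
          rw [hβ', hrB_eq]
      · exfalso
        have hi3 : 2*m+1 < i := by omega
        refine hmax ((1:ℝ) • eps n (2*m+1) + (-1:ℝ) • eps n i)
          ((pair_mem_BsetD (by omega) hi3 (by omega) (Or.inl rfl) (Or.inr rfl)).mpr (by omega))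
          (mem_posB_iff.mpr ⟨2*m+1, i, -1, by omega, hi3, by omega, Or.inr rfl, by module⟩) ?_
        have hs : β + ((1:ℝ) • eps n (2*m+1) + (-1:ℝ) • eps n i)
            = (1:ℝ) • eps n (2*m+1) + (1:ℝ) • eps n (n+1) := by
          rw [hβ']; module
        rw [hs]
        exact pair_mem_rootsB (by omega) (by omega) (by omega) (Or.inl rfl) (Or.inl rfl)
  · rintro rfl
    exact ⟨hrB_mem_BsetD h, hrB_mem_posB h, fun α hα hαp => sum_not_root_BsetD h hα hαp⟩

lemma gamB_inner_self {n i : ℕ} (h1 : 1 ≤ i) (h2 : 2*i ≤ n) : ⟪gamB n i, gamB n i⟫ = 2 := by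
  rw [gamB_rep, inner_pair_pair, del_self (show 1 ≤ 2*i-1 by omega) (show 2*i-1 ≤ n by omega),
    del_ne (show 2*i-1 ≠ 2*i by omega), del_ne (show 2*i ≠ 2*i-1 by omega),
    del_self (show 1 ≤ 2*i by omega) h2]
  norm_num

lemma isHighestRoot_AsetD {n i : ℕ} (h1 : 1 ≤ i) (h2 : 2*i ≤ n)
    (β : EuclideanSpace ℝ (Fin n)) :
    IsHighestRoot (rootsB n) (posB n) (AsetD n i) β ↔ β = gamB n i := by
  constructor
  · rintro ⟨(rfl | rfl), hp, -⟩
    · rfl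
    · exact absurd hp (neg_gamB_not_posB h1 h2)
  · rintro rfl
    refine ⟨Or.inl rfl, gamB_mem_posB h1 h2, ?_⟩
    rintro α (rfl | rfl) hαp hmem
    · have hle := root_inner_self_le hmem
      rw [show gamB n i + gamB n i = (2:ℝ) • gamB n i from by module, real_inner_smul_left,
        real_inner_smul_right, gamB_inner_self h1 h2] at hle
      norm_num at hle
    · exact neg_gamB_not_posB h1 h2 hαp

/-- short root auxiliary vector -/

noncomputable def wvec (n k : ℕ) : EuclideanSpace ℝ (Fin n) :=
  (1:ℝ) • eps n k + (1:ℝ) • eps n (n+1)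

lemma del_np1 (n j : ℕ) : del n j (n+1) = 0 := by
  unfold del; rw [if_neg]; rintro ⟨rfl, -, h⟩; omega

lemma inner_wvec_pair (n k i j : ℕ) (c d : ℝ) :
    ⟪wvec n k, c • eps n i + d • eps n j⟫ = c * del n k i + d * del n k j := by
  rw [wvec, inner_pair_pair, del_out (show n < n+1 by omega), del_out (show n < n+1 by omega)]
  ring

lemma inner_pair_wvec (n k i j : ℕ) (c d : ℝ) :
    ⟪c • eps n i + d • eps n j, wvec n k⟫ = c * del n i k + d * del n j k := by
  rw [wvec, inner_pair_pair, del_np1, del_np1]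
  ring

lemma wvec_mem_BsetD {n m k : ℕ} (h1 : 2*m < k) (h2 : k ≤ n) : wvec n k ∈ BsetD n m :=
  (pair_mem_BsetD (by omega) (by omega) (by omega) (Or.inl rfl) (Or.inl rfl)).mpr h1

lemma reach_invariant {V : Type*} [NormedAddCommGroup V] [InnerProductSpace ℝ V]
    {Rs : Set V} {P : V → Prop} (hP : ∀ x y, P x → Linked Rs x y → P y) {a b : V}
    (ha : P a) (h : Relation.ReflTransGen (Linked Rs) a b) : P b := by
  induction h with
  | refl => exact ha
  | tail h1 h2 ih => exact hP _ _ ih h2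

lemma reach_BsetD {n m : ℕ} {Rs : Set (EuclideanSpace ℝ (Fin n))} (hsub : BsetD n m ⊆ Rs)
    {a b : EuclideanSpace ℝ (Fin n)} (ha : a ∈ BsetD n m) (hb : b ∈ BsetD n m) :
    Relation.ReflTransGen (Linked Rs) a b := by
  obtain ⟨i, j, c, d, g1, g2, g3, hc, hd, heqa⟩ := mem_rootsB_iff.mp ha.1
  have heqa1 : a = c • eps n i + d • eps n j := heqa
  rw [heqa1] at ha
  have hi : 2*m < i := (pair_mem_BsetD g1 g2 g3 hc hd).mp ha
  obtain ⟨i', j', c', d', g1', g2', g3', hc', hd', heqb⟩ := mem_rootsB_iff.mp hb.1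
  rw [heqb] at hb
  have hi' : 2*m < i' := (pair_mem_BsetD g1' g2' g3' hc' hd').mp hb
  have hc0 : c ≠ 0 := by rcases hc with rfl | rfl <;> norm_num
  have hc0' : c' ≠ 0 := by rcases hc' with rfl | rfl <;> norm_num
  have hwi : wvec n i ∈ BsetD n m := wvec_mem_BsetD hi (by omega)
  have hwi' : wvec n i' ∈ BsetD n m := wvec_mem_BsetD hi' (by omega)
  have l1 : Linked Rs a (wvec n i) := by
    refine ⟨hsub (heqa1 ▸ ha), hsub hwi, ?_⟩
    rw [heqa1, inner_pair_wvec, del_self g1 (by omega), del_ne (show j ≠ i by omega)]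
    simpa using hc0
  have l4 : Linked Rs (wvec n i') b := by
    refine ⟨hsub hwi', hsub (heqb ▸ hb), ?_⟩
    rw [heqb, inner_wvec_pair, del_self g1' (by omega), del_ne (show i' ≠ j' by omega)]
    simpa using hc0'
  have mid : Relation.ReflTransGen (Linked Rs) (wvec n i) (wvec n i') := by
    rcases lt_trichotomy i i' with hlt | rfl | hlt
    · have hu : (1:ℝ) • eps n i + (1:ℝ) • eps n i' ∈ BsetD n m :=
        (pair_mem_BsetD (by omega) hlt (by omega) (Or.inl rfl) (Or.inl rfl)).mpr hi
      refine Relation.ReflTransGen.head ⟨hsub hwi, hsub hu, ?_⟩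
        (Relation.ReflTransGen.single ⟨hsub hu, hsub hwi', ?_⟩)
      · rw [inner_wvec_pair, del_self g1 (by omega), del_ne (show i ≠ i' by omega)]
        norm_num
      · rw [inner_pair_wvec, del_self g1' (by omega), del_ne (show i ≠ i' by omega)]
        norm_num
    · exact Relation.ReflTransGen.refl
    · have hu : (1:ℝ) • eps n i' + (1:ℝ) • eps n i ∈ BsetD n m :=
        (pair_mem_BsetD (by omega) hlt (by omega) (Or.inl rfl) (Or.inl rfl)).mpr hi'
      refine Relation.ReflTransGen.head ⟨hsub hwi, hsub hu, ?_⟩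
        (Relation.ReflTransGen.single ⟨hsub hu, hsub hwi', ?_⟩)
      · rw [inner_wvec_pair, del_self g1 (by omega), del_ne (show i ≠ i' by omega)]
        norm_num
      · rw [inner_pair_wvec, del_self g1' (by omega), del_ne (show i ≠ i' by omega)]
        norm_num
  exact (Relation.ReflTransGen.head l1 mid).trans (Relation.ReflTransGen.single l4)

lemma BsetD_zero (n : ℕ) : BsetD n 0 = rootsB n := by
  ext v
  constructor
  · exact fun h => h.1
  · exact fun h => ⟨h, fun k h1 h2 => by omega⟩

lemma isComponent_rootsB {n : ℕ} (hn : 1 ≤ n) (C : Set (EuclideanSpace ℝ (Fin n))) :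
    IsComponent (rootsB n) C ↔ C = BsetD n 0 := by
  have hsub : BsetD n 0 ⊆ rootsB n := fun v hv => hv.1
  constructor
  · rintro ⟨a, haRs, rfl⟩
    have ha0 : a ∈ BsetD n 0 := (BsetD_zero n) ▸ haRs
    ext b
    simp only [Set.mem_setOf_eq]
    constructor
    · intro h
      refine ⟨?_, fun k h1 h2 => by omega⟩
      exact reach_invariant (fun x y _ hl => hl.2.1) haRs h
    · intro hb
      exact reach_BsetD hsub ha0 hb
  · rintro rfl
    have hw : wvec n 1 ∈ BsetD n 0 := wvec_mem_BsetD (by omega) hn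
    refine ⟨wvec n 1, hsub hw, ?_⟩
    ext b
    simp only [Set.mem_setOf_eq]
    constructor
    · intro hb
      exact reach_BsetD hsub hw hb
    · intro h
      refine ⟨?_, fun k h1 h2 => by omega⟩
      exact reach_invariant (fun x y _ hl => hl.2.1) (hsub hw) h

lemma BsetD_anti {n m : ℕ} {v : EuclideanSpace ℝ (Fin n)} (h : v ∈ BsetD n (m+1)) :
    v ∈ BsetD n m := ⟨h.1, fun k h1 h2 => h.2 k h1 (by omega)⟩

lemma gamB_orth_BsetD {n m : ℕ} {v : EuclideanSpace ℝ (Fin n)} (h : v ∈ BsetD n (m+1)) :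
    ⟪gamB n (m+1), v⟫ = 0 := by
  have h1 := h.2 (2*m+1) (by omega) (by omega)
  have h2 := h.2 (2*m+2) (by omega) (by omega)
  have hg : gamB n (m+1) = eps n (2*m+1) - eps n (2*m+2) := by
    rw [gamB, show 2*(m+1)-1 = 2*m+1 by omega, show 2*(m+1) = 2*m+2 by omega]
  rw [hg, inner_sub_left, h1, h2, sub_zero]

lemma hrB_orth_BsetD {n m : ℕ} {v : EuclideanSpace ℝ (Fin n)} (h : v ∈ BsetD n (m+1)) :
    ⟪hrB n m, v⟫ = 0 := by
  have h1 := h.2 (2*m+1) (by omega) (by omega)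
  have h2 := h.2 (2*m+2) (by omega) (by omega)
  rw [hrB, inner_add_left, h1, h2, add_zero]

lemma sub_BsetD_eq {n m : ℕ} (hb : 2*m+2 ≤ n) :
    {α ∈ BsetD n m | ⟪α, hrB n m⟫ = 0} = AsetD n (m+1) ∪ BsetD n (m+1) := by
  have hga : gamB n (m+1) = (1:ℝ) • eps n (2*m+1) + (-1:ℝ) • eps n (2*m+2) := by
    rw [gamB_rep, show 2*(m+1)-1 = 2*m+1 by omega, show 2*(m+1) = 2*m+2 by omega]
  ext v
  constructor
  · rintro ⟨hv, horth⟩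
    obtain ⟨i, j, c, d, g1, g2, g3, hc, hd, heq⟩ := mem_rootsB_iff.mp hv.1
    rw [heq] at hv
    have hi : 2*m < i := (pair_mem_BsetD g1 g2 g3 hc hd).mp hv
    rw [heq, hrB_rep, inner_pair_pair, del_ne (show j ≠ 2*m+1 by omega)] at horth
    by_cases hia : i = 2*m+1
    · rw [hia, del_self (by omega) (by omega), del_ne (show 2*m+1 ≠ 2*m+2 by omega)] at horth
      by_cases hjb : j = 2*m+2
      · rw [hjb, del_self (by omega) (by omega)] at horth
        left
        have hdc : d = -c := by linarith
        rcases hc with rfl | rfl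
        · refine Or.inl ?_
          rw [heq, hia, hjb, hga, hdc]
        · refine Or.inr ?_
          rw [heq, hia, hjb, hdc, hga]
          module
      · rw [del_ne (show j ≠ 2*m+2 from hjb)] at horth
        exfalso
        rcases hc with rfl | rfl <;> norm_num at horth
    · rw [del_ne (show i ≠ 2*m+1 from hia)] at horth
      by_cases hib : i = 2*m+2
      · exfalso
        rw [hib, del_self (by omega) (by omega), del_ne (show j ≠ 2*m+2 by omega)] at horth
        rcases hc with rfl | rfl <;> norm_num at horth
      · right
        rw [heq]
        exact (pair_mem_BsetD g1 g2 g3 hc hd).mpr (by omega)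
  · rintro (h | h)
    · have hmem : v ∈ BsetD n m := by
        rcases h with rfl | rfl
        · rw [hga]
          exact (pair_mem_BsetD (by omega) (by omega) (by omega) (Or.inl rfl)
            (Or.inr rfl)).mpr (by omega)
        · rw [show -gamB n (m+1) = (-1:ℝ) • eps n (2*m+1) + (1:ℝ) • eps n (2*m+2) from by
            rw [hga]; module]
          exact (pair_mem_BsetD (by omega) (by omega) (by omega) (Or.inr rfl)
            (Or.inl rfl)).mpr (by omega)
      refine ⟨hmem, ?_⟩
      have hcalc : ⟪gamB n (m+1), hrB n m⟫ = 0 := by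
        rw [hga, hrB_rep, inner_pair_pair, del_self (by omega) (show 2*m+1 ≤ n by omega),
          del_ne (show 2*m+1 ≠ 2*m+2 by omega), del_ne (show 2*m+2 ≠ 2*m+1 by omega),
          del_self (by omega) hb]
        ring
      rcases h with rfl | rfl
      · exact hcalc
      · rw [inner_neg_left, hcalc, neg_zero]
    · exact ⟨BsetD_anti h, by rw [real_inner_comm]; exact hrB_orth_BsetD h⟩

lemma sub_BsetD_empty {n m : ℕ} (h : 2*m+1 = n) :
    {α ∈ BsetD n m | ⟪α, hrB n m⟫ = 0} = ∅ := by
  ext v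
  simp only [Set.mem_empty_iff_false, iff_false, Set.mem_setOf_eq, not_and]
  rintro hv horth
  obtain ⟨i, j, c, d, g1, g2, g3, hc, hd, heq⟩ := mem_rootsB_iff.mp hv.1
  rw [heq] at hv
  have hi : 2*m < i := (pair_mem_BsetD g1 g2 g3 hc hd).mp hv
  have hii : i = n := by omega
  have hjj : j = n+1 := by omega
  rw [heq, hrB_rep, inner_pair_pair, hii, hjj, show 2*m+1 = n from h,
    show 2*m+2 = n+1 from by omega, del_self (show 1 ≤ n by omega) (le_refl n),
    del_np1, del_out (show n < n+1 by omega), del_np1] at horth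
  rcases hc with rfl | rfl <;> norm_num at horth

lemma sub_AsetD_empty {n i : ℕ} (h1 : 1 ≤ i) (h2 : 2*i ≤ n) :
    {α ∈ AsetD n i | ⟪α, gamB n i⟫ = 0} = ∅ := by
  ext v
  simp only [Set.mem_empty_iff_false, iff_false, Set.mem_setOf_eq, not_and]
  rintro (rfl | rfl) horth
  · rw [gamB_inner_self h1 h2] at horth; norm_num at horth
  · rw [inner_neg_left, gamB_inner_self h1 h2] at horth; norm_num at horth

lemma isComponent_empty {V : Type*} [NormedAddCommGroup V] [InnerProductSpace ℝ V]
    (C : Set V) : ¬ IsComponent (∅ : Set V) C := by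
  rintro ⟨a, ha, -⟩
  exact ha

lemma AsetD_disj_BsetD {n m : ℕ} : gamB n (m+1) ∉ BsetD n (m+1) := by
  intro h
  have := gamB_orth_BsetD h
  have hg := gamB_inner_self (i := m+1) (n := n)
  by_cases hb : 2*(m+1) ≤ n
  · rw [hg (by omega) hb] at this; norm_num at this
  · obtain ⟨i, j, c, d, g1, g2, g3, hc, hd, heq⟩ := mem_rootsB_iff.mp h.1
    rw [heq] at h
    have := (pair_mem_BsetD g1 g2 g3 hc hd).mp h
    omega

lemma isComponent_sub {n m : ℕ} (hb : 2*m+2 ≤ n) (C : Set (EuclideanSpace ℝ (Fin n))) :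
    IsComponent {α ∈ BsetD n m | ⟪α, hrB n m⟫ = 0} C ↔
      C = AsetD n (m+1) ∨ (2*m+3 ≤ n ∧ C = BsetD n (m+1)) := by
  set Rs : Set (EuclideanSpace ℝ (Fin n)) := {α ∈ BsetD n m | ⟪α, hrB n m⟫ = 0} with hRs
  have hRseq : Rs = AsetD n (m+1) ∪ BsetD n (m+1) := sub_BsetD_eq hb
  have hsubB : BsetD n (m+1) ⊆ Rs := by rw [hRseq]; exact Set.subset_union_right
  have hsubA : AsetD n (m+1) ⊆ Rs := by rw [hRseq]; exact Set.subset_union_left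
  have hg2 : ⟪gamB n (m+1), gamB n (m+1)⟫ = 2 := gamB_inner_self (by omega) (by omega)
  -- invariants
  have invA : ∀ x y : EuclideanSpace ℝ (Fin n), x ∈ AsetD n (m+1) → Linked Rs x y →
      y ∈ AsetD n (m+1) := by
    rintro x y hx ⟨-, hy, hxy⟩
    rw [hRseq] at hy
    rcases hy with hy | hy
    · exact hy
    · exfalso
      apply hxy
      rcases hx with rfl | rfl
      · exact gamB_orth_BsetD hy
      · rw [inner_neg_left, gamB_orth_BsetD hy, neg_zero]
  have invB : ∀ x y : EuclideanSpace ℝ (Fin n), x ∈ BsetD n (m+1) → Linked Rs x y →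
      y ∈ BsetD n (m+1) := by
    rintro x y hx ⟨-, hy, hxy⟩
    rw [hRseq] at hy
    rcases hy with hy | hy
    · exfalso
      apply hxy
      rcases hy with rfl | rfl
      · rw [real_inner_comm]; exact gamB_orth_BsetD hx
      · rw [inner_neg_right, real_inner_comm, gamB_orth_BsetD hx, neg_zero]
    · exact hy
  have reachA : ∀ a b : EuclideanSpace ℝ (Fin n), a ∈ AsetD n (m+1) → b ∈ AsetD n (m+1) →
      Relation.ReflTransGen (Linked Rs) a b := by
    intro a b ha hb'
    have hlink : ∀ x y : EuclideanSpace ℝ (Fin n), x ∈ AsetD n (m+1) → y ∈ AsetD n (m+1) →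
        Linked Rs x y := by
      intro x y hx hy
      refine ⟨hsubA hx, hsubA hy, ?_⟩
      rcases hx with rfl | rfl <;> rcases hy with rfl | rfl
      · rw [hg2]; norm_num
      · rw [inner_neg_right, hg2]; norm_num
      · rw [inner_neg_left, hg2]; norm_num
      · rw [inner_neg_left, inner_neg_right, hg2]; norm_num
    exact Relation.ReflTransGen.single (hlink a b ha hb')
  constructor
  · rintro ⟨a, haRs, rfl⟩
    have ha' := haRs
    rw [hRseq] at ha'
    rcases ha' with ha' | ha'
    · left
      ext b
      simp only [Set.mem_setOf_eq]
      exact ⟨fun h => reach_invariant invA ha' h, fun h => reachA a b ha' h⟩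
    · right
      obtain ⟨i, j, c, d, g1, g2, g3, hc, hd, heq⟩ := mem_rootsB_iff.mp ha'.1
      have hi : 2*(m+1) < i := (pair_mem_BsetD g1 g2 g3 hc hd).mp (heq ▸ ha')
      refine ⟨by omega, ?_⟩
      ext b
      simp only [Set.mem_setOf_eq]
      exact ⟨fun h => reach_invariant invB ha' h, fun h => reach_BsetD hsubB ha' h⟩
  · rintro (rfl | ⟨hn3, rfl⟩)
    · refine ⟨gamB n (m+1), hsubA (Or.inl rfl), ?_⟩
      ext b
      simp only [Set.mem_setOf_eq]
      exact ⟨fun h => reachA _ b (Or.inl rfl) h, fun h => reach_invariant invA (Or.inl rfl) h⟩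
    · have hw : wvec n (2*m+3) ∈ BsetD n (m+1) := wvec_mem_BsetD (by omega) hn3
      refine ⟨wvec n (2*m+3), hsubB hw, ?_⟩
      ext b
      simp only [Set.mem_setOf_eq]
      exact ⟨fun h => reach_BsetD hsubB hw h, fun h => reach_invariant invB hw h⟩

lemma cascadeSub_BsetD {n : ℕ} : ∀ m, 2*m < n → CascadeSub (rootsB n) (posB n) (BsetD n m) := by
  intro m
  induction m with
  | zero => exact fun h => .base _ ((isComponent_rootsB (by omega) _).mpr rfl)
  | succ m ih =>
    intro h
    exact .step (BsetD n m) _ (hrB n m) (ih (by omega))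
      ((isHighestRoot_BsetD (by omega) _).mpr rfl)
      ((isComponent_sub (by omega) _).mpr (Or.inr ⟨by omega, rfl⟩))

lemma cascadeSub_AsetD {n i : ℕ} (h1 : 1 ≤ i) (h2 : 2*i ≤ n) :
    CascadeSub (rootsB n) (posB n) (AsetD n i) := by
  have hA : AsetD n i = AsetD n ((i-1)+1) := by rw [show i-1+1 = i by omega]
  refine CascadeSub.step (BsetD n (i-1)) _ (hrB n (i-1)) (cascadeSub_BsetD _ (by omega))
    ((isHighestRoot_BsetD (by omega) _).mpr rfl) ?_
  exact (isComponent_sub (show 2*(i-1)+2 ≤ n by omega) _).mpr (Or.inl hA)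

lemma cascadeSub_iff {n : ℕ} (hn : 2 ≤ n) (K : Set (EuclideanSpace ℝ (Fin n))) :
    CascadeSub (rootsB n) (posB n) K ↔
      (∃ m, 2*m < n ∧ K = BsetD n m) ∨ (∃ i, 1 ≤ i ∧ 2*i ≤ n ∧ K = AsetD n i) := by
  constructor
  · intro h
    induction h with
    | base C hC => exact Or.inl ⟨0, by omega, (isComponent_rootsB (by omega) C).mp hC⟩
    | step K C β hK hβ hcomp ih =>
      rcases ih with ⟨m, hm, rfl⟩ | ⟨i, hi1, hi2, rfl⟩
      · have hβ' := (isHighestRoot_BsetD (by omega) β).mp hβ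
        subst hβ'
        by_cases hb : 2*m+2 ≤ n
        · rcases (isComponent_sub hb C).mp hcomp with h | ⟨h1, h2⟩
          · exact Or.inr ⟨m+1, by omega, by omega, h⟩
          · exact Or.inl ⟨m+1, by omega, h2⟩
        · rw [sub_BsetD_empty (by omega)] at hcomp
          exact absurd hcomp (isComponent_empty C)
      · have hβ' := (isHighestRoot_AsetD hi1 hi2 β).mp hβ
        subst hβ'
        rw [sub_AsetD_empty hi1 hi2] at hcomp
        exact absurd hcomp (isComponent_empty C)
  · rintro (⟨m, hm, rfl⟩ | ⟨i, h1, h2, rfl⟩)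
    · exact cascadeSub_BsetD m hm
    · exact cascadeSub_AsetD h1 h2

theorem statement_5 (n : ℕ) (hn : 2 ≤ n) :
    cascadeSet (rootsB n) (posB n)
      = {v | ∃ i, 1 ≤ i ∧ i ≤ n / 2 ∧ v = eps n (2 * i - 1) + eps n (2 * i)}
        ∪ {v | ∃ i, 1 ≤ i ∧ i ≤ (n + 1) / 2 ∧ v = eps n (2 * i - 1) - eps n (2 * i)} := by
  ext v
  constructor
  · rintro ⟨K, hK, hβ⟩
    rcases (cascadeSub_iff hn K).mp hK with ⟨m, hm, rfl⟩ | ⟨i, h1, h2, rfl⟩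
    · have hv := (isHighestRoot_BsetD (by omega) v).mp hβ
      by_cases hb : 2*m+2 ≤ n
      · left
        refine ⟨m+1, by omega, by omega, ?_⟩
        rw [hv, hrB, show 2*(m+1)-1 = 2*m+1 by omega, show 2*(m+1) = 2*m+2 by omega]
      · right
        refine ⟨m+1, by omega, by omega, ?_⟩
        have hz : eps n (n+1) = 0 := eps_out (k := n+1) (by omega)
        rw [hv, hrB, show 2*(m+1)-1 = 2*m+1 by omega, show 2*(m+1) = 2*m+2 by omega,
          show 2*m+2 = n+1 by omega, hz]
        module
    · right
      exact ⟨i, h1, by omega, by rw [(isHighestRoot_AsetD h1 h2 v).mp hβ, gamB]⟩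
  · rintro (⟨i, h1, h2, hv⟩ | ⟨i, h1, h2, hv⟩)
    · refine ⟨BsetD n (i-1), cascadeSub_BsetD _ (by omega),
        (isHighestRoot_BsetD (by omega) v).mpr ?_⟩
      rw [hv, hrB, show 2*(i-1)+1 = 2*i-1 by omega, show 2*(i-1)+2 = 2*i by omega]
    · by_cases hb : 2*i ≤ n
      · exact ⟨AsetD n i, cascadeSub_AsetD h1 hb,
          (isHighestRoot_AsetD h1 hb v).mpr (by rw [hv, gamB])⟩
      · have h2i : 2*i = n+1 := by omega
        have hz : eps n (n+1) = 0 := eps_out (k := n+1) (by omega)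
        refine ⟨BsetD n (i-1), cascadeSub_BsetD _ (by omega),
          (isHighestRoot_BsetD (by omega) v).mpr ?_⟩
        rw [hv, hrB, show 2*(i-1)+1 = 2*i-1 by omega, show 2*(i-1)+2 = 2*i by omega, h2i, hz]
        module
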